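/- arXiv:2011.06067 — 6 statements merged into one kernel-verified Lean document; each statement's English description precedes it below -/
import Mathlib

section
/- Let 1 < α < 2, let β satisfy 1/α + 1/β = 1, and let d ∈ (0, 1 − 1/α). For every g ∈ L^1(ℝ) ∩ L^α(ℝ) and every h ∈ L^β(ℝ), one has ∫_ℝ |h(x) (I_-^d g)(x)| dx ≤ [ (1/Γ(d)) ( ‖g‖_α / d + ‖g‖_1 / (α(1−d) − 1)^{1/α} ) ] · ‖h‖_β. -/
/-!
Substituting `t = x + s` gives `Γ(d) |I_-^d g (x)| ≤ ∫ |g (x + s)| k(s) ds` with `k(s) = s^(d-1)`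
for `s > 0`. Split `k` at `s = 1`. Near `0` the kernel is integrable, `∫₀¹ k = 1/d`, so after
exchanging the integrals Hölder's inequality for each translate of `g` contributes
`‖g‖_α ‖h‖_β / d`. Near `∞` the kernel lies in `L^α` because `α(1-d) > 1`, with
`‖k‖_α = (α(1-d) - 1)^(-1/α)`; now the `L¹` norm of `g` is pulled out and Hölder's inequality
is applied to `h` against the reflected translates of `k`.
-/

open MeasureTheory

/-- The right-sided Riemann–Liouville fractional integral of order `d`. -/
noncomputable def RLright (d : ℝ) (f : ℝ → ℝ) (x : ℝ) : ℝ :=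
  (1 / Real.Gamma d) * ∫ t in Set.Ioi x, f t * (t - x) ^ (d - 1)

open Set
open scoped ENNReal

section Convolution

variable {G : Type*} [MeasurableSpace G] [AddCommGroup G] [MeasurableAdd₂ G] {μ : Measure G}
  [μ.IsAddLeftInvariant] {p q : ℝ} {φ ψ k : G → ℝ≥0∞}

theorem lintegral_mul_comp_add_le (hpq : p.HolderConjugate q) (hφ : Measurable φ)
    (hψ : Measurable ψ) (s : G) :
    ∫⁻ x, φ x * ψ (x + s) ∂μ ≤ (∫⁻ x, φ x ^ p ∂μ) ^ (1 / p) * (∫⁻ x, ψ x ^ q ∂μ) ^ (1 / q) := by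
  calc ∫⁻ x, φ x * ψ (x + s) ∂μ
      ≤ (∫⁻ x, φ x ^ p ∂μ) ^ (1 / p) * (∫⁻ x, ψ (x + s) ^ q ∂μ) ^ (1 / q) :=
        ENNReal.lintegral_mul_le_Lp_mul_Lq μ hpq hφ.aemeasurable (by fun_prop)
    _ = _ := by rw [lintegral_add_right_eq_self (fun x => ψ x ^ q) s]

theorem lintegral_mul_lintegral_comp_add_mul_le_of_lintegral [SFinite μ]
    (hpq : p.HolderConjugate q) (hφ : Measurable φ) (hψ : Measurable ψ) (hk : Measurable k) :
    ∫⁻ x, φ x * ∫⁻ s, ψ (x + s) * k s ∂μ ∂μ ≤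
      (∫⁻ s, k s ∂μ) * ((∫⁻ x, φ x ^ p ∂μ) ^ (1 / p) * (∫⁻ x, ψ x ^ q ∂μ) ^ (1 / q)) := by
  have hmeas : AEMeasurable (Function.uncurry fun x s => φ x * ψ (x + s) * k s) (μ.prod μ) := by
    unfold Function.uncurry
    fun_prop
  calc ∫⁻ x, φ x * ∫⁻ s, ψ (x + s) * k s ∂μ ∂μ
      = ∫⁻ x, ∫⁻ s, φ x * ψ (x + s) * k s ∂μ ∂μ := by
        refine lintegral_congr fun x => ?_
        rw [← lintegral_const_mul (φ x) (f := fun s => ψ (x + s) * k s) (by fun_prop)]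
        simp only [mul_assoc]
    _ = ∫⁻ s, (∫⁻ x, φ x * ψ (x + s) ∂μ) * k s ∂μ := by
        rw [lintegral_lintegral_swap hmeas]
        exact lintegral_congr fun s => lintegral_mul_const _ (by fun_prop)
    _ ≤ ∫⁻ s, ((∫⁻ x, φ x ^ p ∂μ) ^ (1 / p) * (∫⁻ x, ψ x ^ q ∂μ) ^ (1 / q)) * k s ∂μ :=
        lintegral_mono fun s => mul_le_mul_left (lintegral_mul_comp_add_le hpq hφ hψ s) _
    _ = _ := by rw [lintegral_const_mul _ hk, mul_comm]

theorem lintegral_mul_lintegral_comp_add_mul_le_of_lintegral_rpow [SFinite μ] [MeasurableNeg G]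
    [μ.IsNegInvariant] (hpq : p.HolderConjugate q) (hφ : Measurable φ) (hψ : Measurable ψ)
    (hk : Measurable k) :
    ∫⁻ x, φ x * ∫⁻ s, ψ (x + s) * k s ∂μ ∂μ ≤
      (∫⁻ t, ψ t ∂μ) * ((∫⁻ x, φ x ^ p ∂μ) ^ (1 / p) * (∫⁻ s, k s ^ q ∂μ) ^ (1 / q)) := by
  have hmeas : AEMeasurable (Function.uncurry fun x t => ψ t * (φ x * k (t - x))) (μ.prod μ) := by
    unfold Function.uncurry
    fun_prop
  have hreflect (t : G) : ∫⁻ x, k (t - x) ^ q ∂μ = ∫⁻ s, k s ^ q ∂μ :=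
    (Measure.measurePreserving_sub_left μ t).lintegral_comp (hk.pow_const q)
  calc ∫⁻ x, φ x * ∫⁻ s, ψ (x + s) * k s ∂μ ∂μ
      = ∫⁻ x, ∫⁻ t, ψ t * (φ x * k (t - x)) ∂μ ∂μ := by
        refine lintegral_congr fun x => ?_
        rw [← lintegral_add_left_eq_self (fun t => ψ t * (φ x * k (t - x))) x,
          ← lintegral_const_mul (φ x) (f := fun s => ψ (x + s) * k s) (by fun_prop)]
        simp only [add_sub_cancel_left, mul_left_comm]
    _ = ∫⁻ t, ψ t * ∫⁻ x, φ x * k (t - x) ∂μ ∂μ := by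
        rw [lintegral_lintegral_swap hmeas]
        exact lintegral_congr fun t => lintegral_const_mul _ (by fun_prop)
    _ ≤ ∫⁻ t, ψ t * ((∫⁻ x, φ x ^ p ∂μ) ^ (1 / p) * (∫⁻ s, k s ^ q ∂μ) ^ (1 / q)) ∂μ := by
        refine lintegral_mono fun t => mul_le_mul_right ?_ _
        rw [← hreflect t]
        exact ENNReal.lintegral_mul_le_Lp_mul_Lq μ hpq hφ.aemeasurable (by fun_prop)
    _ = _ := lintegral_mul_const _ hψ

end Convolution

theorem lintegral_mul_indicator_eq {α : Type*} [MeasurableSpace α] {μ : Measure α} {s : Set α}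
    (hs : MeasurableSet s) (f g : α → ℝ≥0∞) :
    ∫⁻ x, f x * s.indicator g x ∂μ = ∫⁻ x in s, f x * g x ∂μ := by
  simp_rw [← indicator_mul_right]
  exact lintegral_indicator hs _

theorem MeasureTheory.MemLp.lintegral_enorm_rpow_rpow_eq {α : Type*} [MeasurableSpace α] {μ : Measure α}
    {f : α → ℝ} {p : ℝ} (hp : 0 < p) (hf : MemLp f (ENNReal.ofReal p) μ) :
    (∫⁻ x, ‖f x‖ₑ ^ p ∂μ) ^ (1 / p) = ENNReal.ofReal ((∫ x, |f x| ^ p ∂μ) ^ (1 / p)) := by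
  have h := hf.eLpNorm_eq_integral_rpow_norm (by simpa using hp) ENNReal.ofReal_ne_top
  rw [eLpNorm_eq_lintegral_rpow_enorm_toReal (by simpa using hp) ENNReal.ofReal_ne_top,
    ENNReal.toReal_ofReal hp.le] at h
  simpa only [Real.norm_eq_abs, one_div] using h

theorem integral_abs_le_of_lintegral_enorm_le {α : Type*} [MeasurableSpace α] {μ : Measure α}
    {f : α → ℝ} {c : ℝ} (hc : 0 ≤ c) (h : ∫⁻ x, ‖f x‖ₑ ∂μ ≤ ENNReal.ofReal c) :
    ∫ x, |f x| ∂μ ≤ c := by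
  by_cases hf : Integrable (fun x => |f x|) μ
  · rw [← ENNReal.ofReal_le_ofReal_iff hc,
      ofReal_integral_eq_lintegral_ofReal hf (ae_of_all _ fun x => abs_nonneg _)]
    simpa only [Real.enorm_eq_ofReal_abs] using h
  · rwa [integral_undef hf]

theorem setLIntegral_enorm_rpow_eq_ofReal_integral {s : Set ℝ} (hs : MeasurableSet s)
    (hs0 : s ⊆ Ici 0) {r : ℝ} (hr : IntegrableOn (fun t : ℝ => t ^ r) s) :
    ∫⁻ t in s, ‖t ^ r‖ₑ = ENNReal.ofReal (∫ t in s, t ^ r) := by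
  rw [ofReal_integral_eq_lintegral_ofReal hr
    ((ae_restrict_iff' hs).2 (ae_of_all _ fun t ht => Real.rpow_nonneg (hs0 ht) r))]
  exact setLIntegral_congr_fun hs fun t ht => Real.enorm_eq_ofReal (Real.rpow_nonneg (hs0 ht) r)

theorem lintegral_Ioc_zero_one_enorm_rpow {d : ℝ} (hd : 0 < d) :
    ∫⁻ s in Ioc (0 : ℝ) 1, ‖s ^ (d - 1)‖ₑ = ENNReal.ofReal (1 / d) := by
  rw [setLIntegral_enorm_rpow_eq_ofReal_integral measurableSet_Ioc
    (Ioc_subset_Icc_self.trans Icc_subset_Ici_self)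
    (intervalIntegral.intervalIntegrable_rpow' (by linarith)).1,
    ← intervalIntegral.integral_of_le zero_le_one,
    integral_rpow (Or.inl (by linarith)), sub_add_cancel, Real.one_rpow, Real.zero_rpow hd.ne']
  norm_num

theorem lintegral_Ioi_one_enorm_rpow_rpow {d q : ℝ} (hq : 0 < q) (hdq : 1 < q * (1 - d)) :
    ∫⁻ s in Ioi (1 : ℝ), ‖s ^ (d - 1)‖ₑ ^ q = ENNReal.ofReal (1 / (q * (1 - d) - 1)) := by
  have hr : (d - 1) * q < -1 := by linarith
  have hpow : ∀ s ∈ Ioi (1 : ℝ), ‖s ^ (d - 1)‖ₑ ^ q = ‖s ^ ((d - 1) * q)‖ₑ := fun s hs => by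
    have hs0 : (0 : ℝ) ≤ s := zero_le_one.trans (le_of_lt hs)
    rw [Real.enorm_eq_ofReal (Real.rpow_nonneg hs0 _), Real.enorm_eq_ofReal (Real.rpow_nonneg hs0 _),
      ENNReal.ofReal_rpow_of_nonneg (Real.rpow_nonneg hs0 _) hq.le, ← Real.rpow_mul hs0]
  rw [setLIntegral_congr_fun measurableSet_Ioi hpow,
    setLIntegral_enorm_rpow_eq_ofReal_integral measurableSet_Ioi
      (Ioi_subset_Ici_self.trans (Ici_subset_Ici.2 zero_le_one))
      (integrableOn_Ioi_rpow_of_lt hr one_pos), integral_Ioi_rpow_of_lt hr one_pos, Real.one_rpow]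
  congr 1
  rw [show (d - 1) * q + 1 = -(q * (1 - d) - 1) by ring, neg_div_neg_eq]

theorem enorm_RLright_le (d : ℝ) (f : ℝ → ℝ) (x : ℝ) :
    ‖RLright d f x‖ₑ ≤ ‖1 / Real.Gamma d‖ₑ * ∫⁻ s in Ioi 0, ‖f (x + s)‖ₑ * ‖s ^ (d - 1)‖ₑ := by
  have htranslate : ∫⁻ t in Ioi x, ‖f t * (t - x) ^ (d - 1)‖ₑ =
      ∫⁻ s in Ioi 0, ‖f (x + s)‖ₑ * ‖s ^ (d - 1)‖ₑ := by
    rw [← (measurePreserving_add_left volume x).setLIntegral_comp_preimage_emb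
      (measurableEmbedding_addLeft x), preimage_const_add_Ioi, sub_self]
    simp only [add_sub_cancel_left, enorm_mul]
  rw [RLright, enorm_mul, ← htranslate]
  exact mul_le_mul_right (enorm_integral_le_lintegral_enorm _) _

theorem enorm_RLright_le_add (d : ℝ) (f : ℝ → ℝ) (x : ℝ) :
    ‖RLright d f x‖ₑ ≤ ‖1 / Real.Gamma d‖ₑ *
      ((∫⁻ s, ‖f (x + s)‖ₑ * (Ioc 0 1).indicator (fun s : ℝ => ‖s ^ (d - 1)‖ₑ) s) +
        ∫⁻ s, ‖f (x + s)‖ₑ * (Ioi 1).indicator (fun s : ℝ => ‖s ^ (d - 1)‖ₑ) s) := by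
  rw [lintegral_mul_indicator_eq measurableSet_Ioc, lintegral_mul_indicator_eq measurableSet_Ioi,
    ← lintegral_union measurableSet_Ioi (Ioc_disjoint_Ioi le_rfl),
    Ioc_union_Ioi_eq_Ioi zero_le_one]
  exact enorm_RLright_le d f x

theorem lintegral_enorm_mul_RLright_le {d p q : ℝ} (hpq : p.HolderConjugate q) {f h : ℝ → ℝ}
    (hf : Measurable f) (hh : Measurable h) :
    ∫⁻ x, ‖h x * RLright d f x‖ₑ ≤ ‖1 / Real.Gamma d‖ₑ *
      ((∫⁻ s in Ioc (0 : ℝ) 1, ‖s ^ (d - 1)‖ₑ) *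
          ((∫⁻ x, ‖h x‖ₑ ^ p) ^ (1 / p) * (∫⁻ x, ‖f x‖ₑ ^ q) ^ (1 / q)) +
        (∫⁻ t, ‖f t‖ₑ) *
          ((∫⁻ x, ‖h x‖ₑ ^ p) ^ (1 / p) * (∫⁻ s in Ioi (1 : ℝ), ‖s ^ (d - 1)‖ₑ ^ q) ^ (1 / q))) := by
  set K₁ := (Ioc 0 1).indicator (fun s : ℝ => ‖s ^ (d - 1)‖ₑ)
  set K₂ := (Ioi 1).indicator (fun s : ℝ => ‖s ^ (d - 1)‖ₑ)
  have hK₁ : Measurable K₁ := (measurable_id.pow_const _).enorm.indicator measurableSet_Ioc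
  have hK₂ : Measurable K₂ := (measurable_id.pow_const _).enorm.indicator measurableSet_Ioi
  have hK₂q : ∫⁻ s, K₂ s ^ q = ∫⁻ s in Ioi (1 : ℝ), ‖s ^ (d - 1)‖ₑ ^ q := by
    rw [← lintegral_indicator measurableSet_Ioi]
    exact congrArg _ (indicator_comp_of_zero (g := fun y : ℝ≥0∞ => y ^ q)
      (ENNReal.zero_rpow_of_pos hpq.symm.pos)).symm
  rw [← lintegral_indicator measurableSet_Ioc, ← hK₂q]
  calc ∫⁻ x, ‖h x * RLright d f x‖ₑ
      ≤ ∫⁻ x, ‖1 / Real.Gamma d‖ₑ * (‖h x‖ₑ * (∫⁻ s, ‖f (x + s)‖ₑ * K₁ s) +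
          ‖h x‖ₑ * ∫⁻ s, ‖f (x + s)‖ₑ * K₂ s) := by
        refine lintegral_mono fun x => ?_
        rw [enorm_mul, ← mul_add, mul_left_comm]
        exact mul_le_mul_right (enorm_RLright_le_add d f x) _
    _ = ‖1 / Real.Gamma d‖ₑ * ((∫⁻ x, ‖h x‖ₑ * ∫⁻ s, ‖f (x + s)‖ₑ * K₁ s) +
          ∫⁻ x, ‖h x‖ₑ * ∫⁻ s, ‖f (x + s)‖ₑ * K₂ s) := by
        rw [lintegral_const_mul' _ _ enorm_ne_top, lintegral_add_left (by fun_prop)]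
    _ ≤ _ := by
        gcongr
        · exact lintegral_mul_lintegral_comp_add_mul_le_of_lintegral hpq hh.enorm hf.enorm hK₁
        · exact lintegral_mul_lintegral_comp_add_mul_le_of_lintegral_rpow hpq hh.enorm hf.enorm hK₂

/-- for `g ∈ L^1(ℝ) ∩ L^α(ℝ)` and `h ∈ L^β(ℝ)`,
`∫ |h (I_-^d g)| ≤ (1/Γ(d)) (‖g‖_α/d + ‖g‖_1/(α(1-d)-1)^{1/α}) ‖h‖_β`. -/
theorem stmt3 (α β d : ℝ) (hα : 1 < α ∧ α < 2) (hβ : 1 / α + 1 / β = 1)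
    (hd : d ∈ Set.Ioo (0 : ℝ) (1 - 1 / α))
    (g h : ℝ → ℝ) (hg : Measurable g) (hh : Measurable h)
    (hg1 : MemLp g 1 (volume : Measure ℝ))
    (hgα : MemLp g (ENNReal.ofReal α) (volume : Measure ℝ))
    (hhβ : MemLp h (ENNReal.ofReal β) (volume : Measure ℝ)) :
    ∫ x : ℝ, |h x * RLright d g x| ≤
      ((1 / Real.Gamma d) *
          ((∫ x : ℝ, |g x| ^ α) ^ (1 / α) / d +
            (∫ x : ℝ, |g x|) / (α * (1 - d) - 1) ^ (1 / α))) *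
        (∫ x : ℝ, |h x| ^ β) ^ (1 / β) := by
  obtain ⟨hd0, hd1⟩ := hd
  have hα0 : 0 < α := by linarith
  have hconj : β.HolderConjugate α :=
    (Real.holderConjugate_iff.2 ⟨hα.1, by simpa only [one_div] using hβ⟩).symm
  have hc : 1 < α * (1 - d) := by
    have := (div_lt_iff₀ hα0).1 (by linarith : 1 / α < 1 - d)
    linarith
  have hc' : 0 < α * (1 - d) - 1 := by linarith
  have hΓ : 0 < 1 / Real.Gamma d := one_div_pos.2 (Real.Gamma_pos_of_pos hd0)
  have hg_lintegral : ∫⁻ t, ‖g t‖ₑ = ENNReal.ofReal (∫ x, |g x|) := by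
    simpa only [Real.norm_eq_abs] using
      (ofReal_integral_norm_eq_lintegral_enorm (memLp_one_iff_integrable.1 hg1)).symm
  refine integral_abs_le_of_lintegral_enorm_le (by positivity)
    ((lintegral_enorm_mul_RLright_le hconj hg hh).trans_eq ?_)
  rw [lintegral_Ioc_zero_one_enorm_rpow hd0, lintegral_Ioi_one_enorm_rpow_rpow hα0 hc, hg_lintegral,
    hgα.lintegral_enorm_rpow_rpow_eq hα0, hhβ.lintegral_enorm_rpow_rpow_eq hconj.pos,
    Real.enorm_eq_ofReal hΓ.le, ENNReal.ofReal_rpow_of_nonneg (by positivity) (by positivity),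
    ← ENNReal.ofReal_mul (by positivity), ← ENNReal.ofReal_mul (by positivity),
    ← ENNReal.ofReal_mul (by positivity), ← ENNReal.ofReal_mul (by positivity),
    ← ENNReal.ofReal_add (by positivity) (by positivity), ← ENNReal.ofReal_mul hΓ.le,
    Real.div_rpow zero_le_one hc'.le, Real.one_rpow]
  congr 1
  ring
end

section
/- Let 1 < α < 2 and d ∈ (0, 1 − 1/α). If g ∈ L^1(ℝ) ∩ L^α(ℝ), then ∫_ℝ |(I_-^d g)(x)|^α dx < ∞, i.e., the right-sided Riemann–Liouville fractional integral I_-^d g belongs to L^α(ℝ). -/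
/-!
For `s < 0` put `k(s) = (-s)^(d-1)`, and `k(s) = 0` otherwise. Then
`|I_-^d g| ≤ Γ(d)⁻¹ (|g| ⋆ k)`. Split `k` at `|s| = 1`: the piece near `0` is integrable since
`d > 0`, and the tail lies in `L^α` precisely because `(d - 1) α < -1`, i.e. `d < 1 - 1/α`.
Young's inequality, in the forms `‖f ⋆ k‖_α ≤ ‖f‖_1 ‖k‖_α` and `‖f ⋆ k‖_α ≤ ‖f‖_α ‖k‖_1`,
bounds the two pieces using `g ∈ L¹` and `g ∈ L^α` respectively.
-/

open MeasureTheory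

open Set
open scoped ENNReal

namespace ENNReal

variable {X : Type*} [MeasurableSpace X] {μ : Measure X}

theorem rpow_lintegral_mul_le {p : ℝ} (hp : 1 ≤ p) {a b : X → ℝ≥0∞}
    (ha : AEMeasurable a μ) (hb : AEMeasurable b μ) :
    (∫⁻ x, a x * b x ∂μ) ^ p ≤ (∫⁻ x, a x ∂μ) ^ (p - 1) * ∫⁻ x, a x * b x ^ p ∂μ := by
  have hp0 : 0 < p := zero_lt_one.trans_le hp
  have hsplit : ∀ x, a x ^ (1 - 1 / p) * (a x * b x ^ p) ^ (1 / p) = a x * b x := fun x => by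
    rw [mul_rpow_of_nonneg _ _ (by positivity), ← rpow_mul,
      mul_one_div_cancel hp0.ne', rpow_one, ← mul_assoc,
      ← rpow_add_of_nonneg _ _ (by rw [sub_nonneg, div_le_one hp0]; exact hp)
        (by positivity), sub_add_cancel, rpow_one]
  have holder := lintegral_mul_norm_pow_le ha (ha.mul (hb.pow_const p))
    (by rw [sub_nonneg, div_le_one hp0]; exact hp) (by positivity) (sub_add_cancel 1 (1 / p))
  simp only [Pi.mul_apply, hsplit] at holder
  calc (∫⁻ x, a x * b x ∂μ) ^ p
      ≤ ((∫⁻ x, a x ∂μ) ^ (1 - 1 / p) * (∫⁻ x, a x * b x ^ p ∂μ) ^ (1 / p)) ^ p := by gcongr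
    _ = (∫⁻ x, a x ∂μ) ^ (p - 1) * ∫⁻ x, a x * b x ^ p ∂μ := by
      rw [mul_rpow_of_nonneg _ _ hp0.le, ← rpow_mul, ← rpow_mul,
        one_div_mul_cancel hp0.ne', rpow_one, sub_mul, one_div_mul_cancel hp0.ne', one_mul]

end ENNReal

section Convolution

variable {G : Type*} [MeasurableSpace G] [AddGroup G] [MeasurableAdd₂ G] [MeasurableNeg G]
  {μ : Measure G}

theorem lintegral_lconvolution_rpow_le [SFinite μ] [μ.IsAddLeftInvariant] {p : ℝ} (hp : 1 ≤ p)
    {f g : G → ℝ≥0∞} (hf : Measurable f) (hg : Measurable g) :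
    ∫⁻ x, (f ⋆ₗ[μ] g) x ^ p ∂μ ≤ (∫⁻ x, f x ∂μ) ^ p * ∫⁻ x, g x ^ p ∂μ := by
  have hmeas : Measurable fun z : G × G => f z.2 * g (-z.2 + z.1) ^ p := by fun_prop
  calc ∫⁻ x, (f ⋆ₗ[μ] g) x ^ p ∂μ
      ≤ ∫⁻ x, (∫⁻ y, f y ∂μ) ^ (p - 1) * ∫⁻ y, f y * g (-y + x) ^ p ∂μ ∂μ :=
        lintegral_mono fun x => ENNReal.rpow_lintegral_mul_le hp hf.aemeasurable (by fun_prop)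
    _ = (∫⁻ y, f y ∂μ) ^ (p - 1) * ∫⁻ y, ∫⁻ x, f y * g (-y + x) ^ p ∂μ ∂μ := by
        rw [lintegral_const_mul _ hmeas.lintegral_prod_right',
          lintegral_lintegral_swap hmeas.aemeasurable]
    _ = (∫⁻ y, f y ∂μ) ^ (p - 1) * ((∫⁻ y, f y ∂μ) * ∫⁻ x, g x ^ p ∂μ) := by
        have hinner : ∀ y, ∫⁻ x, f y * g (-y + x) ^ p ∂μ = f y * ∫⁻ x, g x ^ p ∂μ := fun y => by
          rw [lintegral_const_mul _ (by fun_prop),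
            lintegral_add_left_eq_self (fun x => g x ^ p) (-y)]
        simp only [hinner, lintegral_mul_const _ hf]
    _ = (∫⁻ x, f x ∂μ) ^ p * ∫⁻ x, g x ^ p ∂μ := by
        conv_lhs => enter [2, 1]; rw [← ENNReal.rpow_one (∫⁻ y, f y ∂μ)]
        rw [← mul_assoc, ← ENNReal.rpow_add_of_nonneg _ _ (by linarith) zero_le_one,
          sub_add_cancel]

theorem lconvolution_add {f k₁ k₂ : G → ℝ≥0∞} (hf : Measurable f) (hk₁ : Measurable k₁) :
    f ⋆ₗ[μ] (k₁ + k₂) = f ⋆ₗ[μ] k₁ + f ⋆ₗ[μ] k₂ := by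
  ext x
  simp only [lconvolution_def, Pi.add_apply, mul_add]
  exact lintegral_add_left (by fun_prop) _

end Convolution

section CommGroup

variable {G : Type*} [MeasurableSpace G] [AddCommGroup G] [MeasurableAdd₂ G] [MeasurableNeg G]
  {μ : Measure G} [SFinite μ] [μ.IsAddLeftInvariant] [μ.IsNegInvariant]

theorem lintegral_lconvolution_add_rpow_lt_top {p : ℝ} (hp : 1 ≤ p) {f k₁ k₂ : G → ℝ≥0∞}
    (hf : Measurable f) (hk₁ : Measurable k₁) (hk₂ : Measurable k₂)
    (hf_one : ∫⁻ x, f x ∂μ < ⊤) (hf_p : ∫⁻ x, f x ^ p ∂μ < ⊤)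
    (hk₁_one : ∫⁻ x, k₁ x ∂μ < ⊤) (hk₂_p : ∫⁻ x, k₂ x ^ p ∂μ < ⊤) :
    ∫⁻ x, (f ⋆ₗ[μ] (k₁ + k₂)) x ^ p ∂μ < ⊤ := by
  have hp0 : 0 ≤ p := zero_le_one.trans hp
  rw [lconvolution_add hf hk₁]
  refine ENNReal.lintegral_rpow_add_lt_top_of_lintegral_rpow_lt_top
    (measurable_lconvolution μ hf hk₁).aemeasurable ?_ ?_ hp
  · rw [lconvolution_comm]
    exact (lintegral_lconvolution_rpow_le hp hk₁ hf).trans_lt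
      (ENNReal.mul_lt_top (ENNReal.rpow_lt_top_of_nonneg hp0 hk₁_one.ne) hf_p)
  · exact (lintegral_lconvolution_rpow_le hp hf hk₂).trans_lt
      (ENNReal.mul_lt_top (ENNReal.rpow_lt_top_of_nonneg hp0 hf_one.ne) hk₂_p)

end CommGroup

noncomputable def rlKernel (d : ℝ) : ℝ → ℝ≥0∞ :=
  (Ioi 0).indicator fun s => ENNReal.ofReal (s ^ (d - 1))

theorem enorm_RLright_le_s4 (d : ℝ) (g : ℝ → ℝ) (x : ℝ) :
    ‖RLright d g x‖ₑ ≤ ‖1 / Real.Gamma d‖ₑ * ((‖g ·‖ₑ) ⋆ₗ fun s => rlKernel d (-s)) x := by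
  rw [RLright, enorm_mul]
  gcongr
  refine (enorm_integral_le_lintegral_enorm _).trans_eq ?_
  rw [lconvolution_def, ← lintegral_indicator measurableSet_Ioi]
  congr 1 with t
  by_cases ht : x < t
  · simp [rlKernel, ht, enorm_mul, neg_add_eq_sub,
      Real.enorm_eq_ofReal (Real.rpow_nonneg (sub_pos.2 ht).le _)]
  · simp [rlKernel, ht]

theorem rlKernel_eq_indicator_add_indicator (d : ℝ) :
    rlKernel d = (Ioc 0 1).indicator (fun s => ENNReal.ofReal (s ^ (d - 1)))
      + (Ioi 1).indicator fun s => ENNReal.ofReal (s ^ (d - 1)) := by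
  rw [rlKernel, ← Ioc_union_Ioi_eq_Ioi zero_le_one,
    indicator_union_of_disjoint Ioc_disjoint_Ioi_same]
  rfl

theorem lintegral_indicator_Ioc_rpow_lt_top {r : ℝ} (hr : -1 < r) :
    ∫⁻ s, (Ioc 0 1).indicator (fun s => ENNReal.ofReal (s ^ r)) s < ⊤ := by
  rw [lintegral_indicator measurableSet_Ioc]
  have hint := (intervalIntegrable_iff_integrableOn_Ioc_of_le zero_le_one).1
    (intervalIntegral.intervalIntegrable_rpow' hr)
  exact (lintegral_ofReal_le_lintegral_enorm _).trans_lt hint.2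

theorem lintegral_indicator_Ioi_rpow_rpow_lt_top {p r : ℝ} (hp : 0 < p) (hrp : r * p < -1) :
    ∫⁻ s, (Ioi 1).indicator (fun s => ENNReal.ofReal (s ^ r)) s ^ p < ⊤ := by
  have hpow : ∀ s, (Ioi 1).indicator (fun s => ENNReal.ofReal (s ^ r)) s ^ p
      = (Ioi 1).indicator (fun s => ENNReal.ofReal (s ^ (r * p))) s := fun s => by
    by_cases hs : s ∈ Ioi 1
    · have hs0 : 0 ≤ s := zero_le_one.trans hs.out.le
      rw [indicator_of_mem hs, indicator_of_mem hs,
        ENNReal.ofReal_rpow_of_nonneg (Real.rpow_nonneg hs0 r) hp.le, ← Real.rpow_mul hs0]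
    · rw [indicator_of_notMem hs, indicator_of_notMem hs, ENNReal.zero_rpow_of_pos hp]
  simp only [hpow]
  rw [lintegral_indicator measurableSet_Ioi]
  exact (lintegral_ofReal_le_lintegral_enorm _).trans_lt
    (integrableOn_Ioi_rpow_of_lt hrp zero_lt_one).2

theorem lintegral_lconvolution_rlKernel_rpow_lt_top {d p : ℝ} (hd : 0 < d) (hp : 1 ≤ p)
    (hdp : (d - 1) * p < -1) {f : ℝ → ℝ≥0∞} (hf : Measurable f)
    (hf_one : ∫⁻ x, f x < ⊤) (hf_p : ∫⁻ x, f x ^ p < ⊤) :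
    ∫⁻ x, (f ⋆ₗ fun s => rlKernel d (-s)) x ^ p < ⊤ := by
  set near : ℝ → ℝ≥0∞ := (Ioc 0 1).indicator fun s => ENNReal.ofReal (s ^ (d - 1))
  set far : ℝ → ℝ≥0∞ := (Ioi 1).indicator fun s => ENNReal.ofReal (s ^ (d - 1))
  have hsplit : (fun s => rlKernel d (-s)) = (fun s => near (-s)) + fun s => far (-s) := by
    rw [rlKernel_eq_indicator_add_indicator]; rfl
  rw [hsplit]
  refine lintegral_lconvolution_add_rpow_lt_top hp hf
    (by fun_prop (disch := measurability)) (by fun_prop (disch := measurability))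
    hf_one hf_p ?_ ?_
  · rw [lintegral_neg_eq_self near]
    exact lintegral_indicator_Ioc_rpow_lt_top (by linarith)
  · rw [lintegral_neg_eq_self (far · ^ p)]
    exact lintegral_indicator_Ioi_rpow_rpow_lt_top (by linarith) hdp

/-- if `g ∈ L^1(ℝ) ∩ L^α(ℝ)`, then `∫ |(I_-^d g)(x)|^α dx < ∞`. -/
theorem stmt4 (α d : ℝ) (hα : 1 < α ∧ α < 2)
    (hd : d ∈ Set.Ioo (0 : ℝ) (1 - 1 / α))
    (g : ℝ → ℝ) (hg : Measurable g)
    (hg1 : MemLp g 1 (volume : Measure ℝ))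
    (hgα : MemLp g (ENNReal.ofReal α) (volume : Measure ℝ)) :
    ∫⁻ x : ℝ, ENNReal.ofReal (|RLright d g x| ^ α) < ⊤ := by
  obtain ⟨hα1, -⟩ := hα
  obtain ⟨hd0, hdα⟩ := hd
  have hα0 : 0 < α := zero_lt_one.trans hα1
  have hfar : (d - 1) * α < -1 := by
    have := mul_lt_mul_of_pos_right hdα hα0
    rw [sub_mul, one_div_mul_cancel hα0.ne'] at this
    linarith
  have hg_one : ∫⁻ t, ‖g t‖ₑ < ⊤ := (memLp_one_iff_integrable.1 hg1).2
  have hg_α : ∫⁻ t, ‖g t‖ₑ ^ α < ⊤ := by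
    have := (eLpNorm_lt_top_iff_lintegral_rpow_enorm_lt_top (by simpa) (by simp)).1
      hgα.eLpNorm_lt_top
    rwa [ENNReal.toReal_ofReal hα0.le] at this
  have hconv := lintegral_lconvolution_rlKernel_rpow_lt_top hd0 hα1.le hfar hg.enorm hg_one hg_α
  calc ∫⁻ x, ENNReal.ofReal (|RLright d g x| ^ α)
      = ∫⁻ x, ‖RLright d g x‖ₑ ^ α := by
        simp only [Real.enorm_eq_ofReal_abs, ENNReal.ofReal_rpow_of_nonneg (abs_nonneg _) hα0.le]
    _ ≤ ∫⁻ x, (‖1 / Real.Gamma d‖ₑ * ((‖g ·‖ₑ) ⋆ₗ fun s => rlKernel d (-s)) x) ^ α := by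
        gcongr with x
        exact enorm_RLright_le_s4 d g x
    _ = ‖1 / Real.Gamma d‖ₑ ^ α * ∫⁻ x, ((‖g ·‖ₑ) ⋆ₗ fun s => rlKernel d (-s)) x ^ α := by
        simp only [ENNReal.mul_rpow_of_nonneg _ _ hα0.le]
        exact lintegral_const_mul' _ _ (by finiteness)
    _ < ⊤ := ENNReal.mul_lt_top (by finiteness) hconv
end

section
/- Let 1 < α < 2 and d ∈ (0, 1 − 1/α). If g ∈ L^1(ℝ) ∩ L^α(ℝ), then ∫_ℝ |(I_+^d g)(x)|^α dx < ∞, i.e., the left-sided Riemann–Liouville fractional integral I_+^d g belongs to L^α(ℝ). -/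
/-!
Pointwise, `|I_+^d g| ≤ (|g| ⋆ k) / Γ(d)` with the kernel `k(s) = s^(d-1)` for `s > 0` and
`k(s) = 0` otherwise. Split `k` at `s = 1`: the piece on `(0, 1]` is integrable since `d > 0`,
and the piece on `(1, ∞)` lies in `L^α` since `(d - 1) α < -1`, i.e. `d < 1 - 1/α`. Young's
inequality `‖u ⋆ v‖_α ≤ ‖u‖_1 ‖v‖_α`, used with `|g| ∈ L^α` against the first piece and with
`|g| ∈ L¹` against the second, puts `|g| ⋆ k`, hence `I_+^d g`, in `L^α`.
-/

open MeasureTheory ENNReal Set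

/-- The left-sided Riemann–Liouville fractional integral of order `d`. -/
noncomputable def RLleft (d : ℝ) (f : ℝ → ℝ) (x : ℝ) : ℝ :=
  (1 / Real.Gamma d) * ∫ t in Set.Iio x, f t * (x - t) ^ (d - 1)

theorem ENNReal.rpow_lintegral_mul_le_s5 {X : Type*} [MeasurableSpace X] {μ : Measure X} {p : ℝ}
    (hp : 1 ≤ p) {f g : X → ℝ≥0∞} (hf : AEMeasurable f μ) (hg : AEMeasurable g μ) :
    (∫⁻ a, f a * g a ∂μ) ^ p ≤ (∫⁻ a, f a ∂μ) ^ (p - 1) * ∫⁻ a, f a * g a ^ p ∂μ := by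
  have hp0 : 0 < p := by linarith
  have hq : 0 ≤ 1 - p⁻¹ := sub_nonneg.2 (inv_le_one_of_one_le₀ hp)
  have hHolder := lintegral_mul_norm_pow_le (g := fun a => f a * g a ^ p) hf
    (hf.mul (hg.pow_const p)) hq (inv_nonneg.2 hp0.le) (sub_add_cancel 1 p⁻¹)
  have hsplit : ∀ a, f a ^ (1 - p⁻¹) * (f a * g a ^ p) ^ p⁻¹ = f a * g a := fun a => by
    rw [mul_rpow_of_nonneg _ _ (inv_nonneg.2 hp0.le), ← rpow_mul, mul_inv_cancel₀ hp0.ne',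
      rpow_one, ← mul_assoc, ← rpow_add_of_nonneg _ _ hq (inv_nonneg.2 hp0.le), sub_add_cancel,
      rpow_one]
  simp only [hsplit] at hHolder
  calc (∫⁻ a, f a * g a ∂μ) ^ p
      ≤ ((∫⁻ a, f a ∂μ) ^ (1 - p⁻¹) * (∫⁻ a, f a * g a ^ p ∂μ) ^ p⁻¹) ^ p :=
        rpow_le_rpow hHolder hp0.le
    _ = (∫⁻ a, f a ∂μ) ^ (p - 1) * ∫⁻ a, f a * g a ^ p ∂μ := by
        rw [mul_rpow_of_nonneg _ _ hp0.le, ← rpow_mul, ← rpow_mul, inv_mul_cancel₀ hp0.ne',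
          rpow_one, sub_mul, one_mul, inv_mul_cancel₀ hp0.ne']

section LConvolution

variable {G : Type*} [MeasurableSpace G] {μ : Measure G} {p : ℝ} {f g g' : G → ℝ≥0∞}

theorem lconvolution_add_s5 [AddGroup G] [MeasurableAdd G] [MeasurableNeg G] (hf : Measurable f)
    (hg : Measurable g) : f ⋆ₗ[μ] (g + g') = f ⋆ₗ[μ] g + f ⋆ₗ[μ] g' := by
  ext x
  simp only [lconvolution_def, Pi.add_apply, mul_add]
  exact lintegral_add_left (by fun_prop) _

theorem lintegral_rpow_lconvolution_le_rpow_lintegral_mul [AddGroup G] [MeasurableAdd₂ G]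
    [MeasurableNeg G] [SFinite μ] [μ.IsAddLeftInvariant] (hp : 1 ≤ p) (hf : Measurable f)
    (hg : Measurable g) :
    ∫⁻ x, (f ⋆ₗ[μ] g) x ^ p ∂μ ≤ (∫⁻ x, f x ∂μ) ^ p * ∫⁻ x, g x ^ p ∂μ := by
  calc ∫⁻ x, (f ⋆ₗ[μ] g) x ^ p ∂μ
      ≤ ∫⁻ x, (∫⁻ y, f y ∂μ) ^ (p - 1) * ∫⁻ y, f y * g (-y + x) ^ p ∂μ ∂μ :=
        lintegral_mono fun x => rpow_lintegral_mul_le_s5 hp hf.aemeasurable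
          (by fun_prop : Measurable fun y => g (-y + x)).aemeasurable
    _ = (∫⁻ y, f y ∂μ) ^ (p - 1) * ∫⁻ y, f y * ∫⁻ x, g x ^ p ∂μ ∂μ := by
        rw [lintegral_const_mul _ (by fun_prop), lintegral_lintegral_swap (by fun_prop)]
        congr 1
        refine lintegral_congr fun y => ?_
        rw [lintegral_const_mul _ (by fun_prop), lintegral_add_left_eq_self (fun x => g x ^ p)]
    _ = (∫⁻ x, f x ∂μ) ^ p * ∫⁻ x, g x ^ p ∂μ := by
        rw [lintegral_mul_const _ hf, ← mul_assoc]
        congr 1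
        simpa using
          (rpow_add_of_nonneg (x := ∫⁻ x, f x ∂μ) (p - 1) 1 (by linarith) zero_le_one).symm

theorem lintegral_rpow_lconvolution_le_mul_rpow_lintegral [AddCommGroup G] [MeasurableAdd₂ G]
    [MeasurableNeg G] [SFinite μ] [μ.IsAddLeftInvariant] [μ.IsNegInvariant] (hp : 1 ≤ p)
    (hf : Measurable f) (hg : Measurable g) :
    ∫⁻ x, (f ⋆ₗ[μ] g) x ^ p ∂μ ≤ (∫⁻ x, f x ^ p ∂μ) * (∫⁻ x, g x ∂μ) ^ p := by
  rw [lconvolution_comm, mul_comm]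
  exact lintegral_rpow_lconvolution_le_rpow_lintegral_mul hp hg hf

end LConvolution

noncomputable def rpowKernel (a : ℝ) : ℝ → ℝ≥0∞ :=
  (Ioi 0).indicator fun s => ‖s ^ a‖ₑ

theorem enorm_RLleft_le (d : ℝ) (g : ℝ → ℝ) (x : ℝ) :
    ‖RLleft d g x‖ₑ ≤ ‖1 / Real.Gamma d‖ₑ * ((fun t => ‖g t‖ₑ) ⋆ₗ rpowKernel (d - 1)) x := by
  rw [RLleft, enorm_mul]
  gcongr
  calc ‖∫ t in Iio x, g t * (x - t) ^ (d - 1)‖ₑ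
      ≤ ∫⁻ t in Iio x, ‖g t * (x - t) ^ (d - 1)‖ₑ := enorm_integral_le_lintegral_enorm _
    _ = ∫⁻ t, ‖g t‖ₑ * rpowKernel (d - 1) (-t + x) := by
        rw [← lintegral_indicator measurableSet_Iio]
        refine lintegral_congr fun t => ?_
        by_cases ht : t < x <;> simp [rpowKernel, indicator, ht, enorm_mul, ← sub_eq_neg_add]

theorem lintegral_indicator_Ioc_enorm_rpow_lt_top {a : ℝ} (ha : -1 < a) :
    ∫⁻ s, (Ioc 0 1).indicator (fun s : ℝ => ‖s ^ a‖ₑ) s < ⊤ := by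
  rw [lintegral_indicator measurableSet_Ioc]
  exact (intervalIntegral.intervalIntegrable_rpow' ha).1.2

theorem lintegral_indicator_Ioi_enorm_rpow_rpow_lt_top {a p : ℝ} (hp : 0 < p) (hap : a * p < -1) :
    ∫⁻ s, (Ioi 1).indicator (fun s : ℝ => ‖s ^ a‖ₑ) s ^ p < ⊤ := by
  have hpow : ∀ s, (Ioi 1).indicator (fun s : ℝ => ‖s ^ a‖ₑ) s ^ p
      = (Ioi 1).indicator (fun s : ℝ => ‖s ^ (a * p)‖ₑ) s := fun s => by
    by_cases hs : s ∈ Ioi 1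
    · have hs0 : 0 ≤ s := le_of_lt (lt_trans one_pos hs)
      rw [indicator_of_mem hs, indicator_of_mem hs, Real.enorm_of_nonneg (Real.rpow_nonneg hs0 _),
        Real.enorm_of_nonneg (Real.rpow_nonneg hs0 _),
        ofReal_rpow_of_nonneg (Real.rpow_nonneg hs0 _) hp.le, Real.rpow_mul hs0]
    · rw [indicator_of_notMem hs, indicator_of_notMem hs, zero_rpow_of_pos hp]
  rw [lintegral_congr hpow, lintegral_indicator measurableSet_Ioi]
  exact (integrableOn_Ioi_rpow_of_lt hap one_pos).2

theorem lintegral_rpow_lconvolution_rpowKernel_lt_top {a p : ℝ} (hp : 1 ≤ p) (ha : -1 < a)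
    (hap : a * p < -1) {f : ℝ → ℝ≥0∞} (hf : Measurable f) (hf_one : ∫⁻ x, f x < ⊤)
    (hf_p : ∫⁻ x, f x ^ p < ⊤) : ∫⁻ x, (f ⋆ₗ rpowKernel a) x ^ p < ⊤ := by
  have hp0 : 0 < p := by linarith
  set φ : ℝ → ℝ≥0∞ := fun s => ‖s ^ a‖ₑ
  have hφ : Measurable φ := by fun_prop
  have hsplit : rpowKernel a = (Ioc 0 1).indicator φ + (Ioi 1).indicator φ := by
    rw [rpowKernel, ← Ioc_union_Ioi_eq_Ioi zero_le_one,
      indicator_union_of_disjoint Ioc_disjoint_Ioi_same]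
    rfl
  rw [hsplit, lconvolution_add_s5 hf (hφ.indicator measurableSet_Ioc)]
  refine lintegral_rpow_add_lt_top_of_lintegral_rpow_lt_top
    (measurable_lconvolution _ hf (hφ.indicator measurableSet_Ioc)).aemeasurable ?_ ?_ hp
  · refine (lintegral_rpow_lconvolution_le_mul_rpow_lintegral hp hf
      (hφ.indicator measurableSet_Ioc)).trans_lt (mul_lt_top hf_p ?_)
    exact rpow_lt_top_of_nonneg hp0.le (lintegral_indicator_Ioc_enorm_rpow_lt_top ha).ne
  · refine (lintegral_rpow_lconvolution_le_rpow_lintegral_mul hp hf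
      (hφ.indicator measurableSet_Ioi)).trans_lt (mul_lt_top ?_ ?_)
    · exact rpow_lt_top_of_nonneg hp0.le hf_one.ne
    · exact lintegral_indicator_Ioi_enorm_rpow_rpow_lt_top hp0 hap

/-- if `g ∈ L^1(ℝ) ∩ L^α(ℝ)`, then `∫ |(I_+^d g)(x)|^α dx < ∞`. -/
theorem stmt5 (α d : ℝ) (hα : 1 < α ∧ α < 2)
    (hd : d ∈ Set.Ioo (0 : ℝ) (1 - 1 / α))
    (g : ℝ → ℝ) (hg : Measurable g)
    (hg1 : MemLp g 1 (volume : Measure ℝ))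
    (hgα : MemLp g (ENNReal.ofReal α) (volume : Measure ℝ)) :
    ∫⁻ x : ℝ, ENNReal.ofReal (|RLleft d g x| ^ α) < ⊤ := by
  obtain ⟨hα1, -⟩ := hα
  obtain ⟨hd0, hd1⟩ := hd
  have hα0 : 0 < α := by linarith
  have hexp : (d - 1) * α < -1 := by
    have := mul_lt_mul_of_pos_right hd1 hα0
    field_simp at this
    linarith
  have hg_one : ∫⁻ t, ‖g t‖ₑ < ⊤ := (memLp_one_iff_integrable.1 hg1).2
  have hg_α : ∫⁻ t, ‖g t‖ₑ ^ α < ⊤ := by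
    simpa [toReal_ofReal hα0.le] using
      lintegral_rpow_enorm_lt_top_of_eLpNorm_lt_top (by simpa using hα0) ofReal_ne_top hgα.2
  calc ∫⁻ x, ENNReal.ofReal (|RLleft d g x| ^ α)
      = ∫⁻ x, ‖RLleft d g x‖ₑ ^ α := by
        simp_rw [Real.enorm_eq_ofReal_abs, ofReal_rpow_of_nonneg (abs_nonneg _) hα0.le]
    _ ≤ ∫⁻ x, (‖1 / Real.Gamma d‖ₑ * ((fun t => ‖g t‖ₑ) ⋆ₗ rpowKernel (d - 1)) x) ^ α :=
        lintegral_mono fun x => rpow_le_rpow (enorm_RLleft_le d g x) hα0.le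
    _ = ‖1 / Real.Gamma d‖ₑ ^ α * ∫⁻ x, ((fun t => ‖g t‖ₑ) ⋆ₗ rpowKernel (d - 1)) x ^ α := by
        simp_rw [mul_rpow_of_nonneg _ _ hα0.le]
        exact lintegral_const_mul' _ _ (rpow_ne_top_of_nonneg hα0.le enorm_ne_top)
    _ < ⊤ := mul_lt_top (rpow_lt_top_of_nonneg hα0.le enorm_ne_top)
        (lintegral_rpow_lconvolution_rpowKernel_lt_top hα1.le (by linarith) hexp hg.enorm
          hg_one hg_α)
end

section
/- Let 1 < α < 2, d ∈ (0, 1 − 1/α), θ_1, θ_2 ∈ ℝ, and let g : ℝ → ℝ be measurable with g(s) = 0 for all s < 0 and |g(s)| ≤ C e^{−cs} for all s ≥ 0, for some constants C, c > 0. Then there exist constants K_1, K_2 > 0 (independent of t and x) such that for all t < 0 and all x > 1: |t φ(t,x)| ≤ K_1 (x−1)^{d−1} and |t ψ(t,x)| ≤ K_2 x^{d−1}. -/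
/-!
After the substitution `s = -t > 0`, both `t φ` and `t ψ` are Riemann–Liouville integrals
`s ∫_p^q h(s(u-p)) (q-u)^{d-1} du` of an exponentially decaying `h`. Split `[p, q]` at its midpoint:
near `p` the kernel is at most `((q-p)/2)^{d-1}` while `∫ s e^{-cs(u-p)} du ≤ 1/c`; near `q` the
weight is at most `s e^{-cs(q-p)/2} ≤ 2/(c(q-p))` while `∫ (q-u)^{d-1} du = (q-p)^d/d`.
Both halves are `O((q-p)^{d-1})` uniformly in `s`.
-/

open MeasureTheory

/-- `φ(t,x) = (1/Γ(d)) ∫_1^x θ₁ g(t(1-u)) (x-u)^{d-1} du`. -/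
noncomputable def phiFun (d θ₁ : ℝ) (g : ℝ → ℝ) (t x : ℝ) : ℝ :=
  (1 / Real.Gamma d) * ∫ u in (1 : ℝ)..x, θ₁ * g (t * (1 - u)) * (x - u) ^ (d - 1)

/-- `ψ(t,x) = (1/Γ(d)) ∫_0^x θ₂ g(-tu) (x-u)^{d-1} du`. -/
noncomputable def psiFun (d θ₂ : ℝ) (g : ℝ → ℝ) (t x : ℝ) : ℝ :=
  (1 / Real.Gamma d) * ∫ u in (0 : ℝ)..x, θ₂ * g (-(t * u)) * (x - u) ^ (d - 1)

open intervalIntegral Real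

noncomputable def decayKernelConst (c d : ℝ) : ℝ := 1 / (c * 2 ^ (d - 1)) + 2 / (c * d)

lemma decayKernelConst_pos {c d : ℝ} (hc : 0 < c) (hd : 0 < d) : 0 < decayKernelConst c d := by
  unfold decayKernelConst; positivity

lemma mul_exp_neg_mul_le_one_div (s : ℝ) {b : ℝ} (hb : 0 < b) : s * exp (-(s * b)) ≤ 1 / b := by
  rw [le_div_iff₀ hb]
  calc s * exp (-(s * b)) * b = s * b * exp (-(s * b)) := by ring
    _ ≤ exp (-1) := mul_exp_neg_le_exp_neg_one _
    _ ≤ 1 := exp_le_one_iff.mpr (by norm_num)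

lemma intervalIntegrable_sub_rpow_sub_one {d : ℝ} (hd : 0 < d) (p q : ℝ) :
    IntervalIntegrable (fun u => (q - u) ^ (d - 1)) volume p q := by
  simpa using ((intervalIntegrable_rpow' (r := d - 1) (by linarith)
    (a := q - p) (b := 0)).comp_sub_left q)

lemma integral_sub_rpow_sub_one {d : ℝ} (hd : 0 < d) (p q : ℝ) :
    ∫ u in p..q, (q - u) ^ (d - 1) = (q - p) ^ d / d := by
  rw [integral_comp_sub_left (fun v => v ^ (d - 1)), sub_self,
    integral_rpow (Or.inl (by linarith)), zero_rpow (by linarith)]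
  simp

lemma integral_mul_exp_neg_le {c : ℝ} (hc : 0 < c) (s p q : ℝ) :
    ∫ u in p..q, s * exp (-(c * s * (u - p))) ≤ 1 / c := by
  have hderiv : ∀ u ∈ Set.uIcc p q, HasDerivAt (fun u => -(1 / c) * exp (-(c * s * (u - p))))
      (s * exp (-(c * s * (u - p)))) u := by
    intro u _
    refine ((((hasDerivAt_id u).sub_const p).const_mul (c * s)).neg.exp.const_mul
      (-(1 / c))).congr_deriv ?_
    field_simp
    simp
  rw [integral_eq_sub_of_hasDerivAt hderiv ((by fun_prop : Continuous _).intervalIntegrable _ _)]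
  simp only [sub_self, mul_zero, neg_zero, exp_zero]
  have : 0 ≤ 1 / c * exp (-(c * s * (q - p))) := by positivity
  linarith

lemma mul_exp_neg_mul_rpow_le_add {c s d p q u : ℝ} (hc : 0 < c) (hs : 0 ≤ s) (hd : d ≤ 1)
    (hpq : p < q) (hu : u ∈ Set.Icc p q) :
    s * exp (-(c * s * (u - p))) * (q - u) ^ (d - 1) ≤
      ((q - p) / 2) ^ (d - 1) * (s * exp (-(c * s * (u - p)))) +
        2 / (c * (q - p)) * (q - u) ^ (d - 1) := by
  have hweight : 0 ≤ s * exp (-(c * s * (u - p))) := by positivity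
  have hkernel : 0 ≤ (q - u) ^ (d - 1) := rpow_nonneg (by linarith [hu.2]) _
  have hcq : 0 < c * (q - p) := mul_pos hc (by linarith)
  rcases le_total u ((p + q) / 2) with hmid | hmid
  · have hkernel_le : (q - u) ^ (d - 1) ≤ ((q - p) / 2) ^ (d - 1) :=
      rpow_le_rpow_of_nonpos (by linarith) (by linarith) (by linarith)
    have : 0 ≤ 2 / (c * (q - p)) * (q - u) ^ (d - 1) := by positivity
    linarith [mul_le_mul_of_nonneg_left hkernel_le hweight]
  · have hweight_le : s * exp (-(c * s * (u - p))) ≤ 2 / (c * (q - p)) :=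
      calc s * exp (-(c * s * (u - p))) ≤ s * exp (-(s * (c * (q - p) / 2))) := by
            gcongr s * exp (-?_)
            nlinarith [mul_nonneg (mul_nonneg hc.le hs) (by linarith : 0 ≤ u - p - (q - p) / 2)]
        _ ≤ 2 / (c * (q - p)) := by
            simpa using mul_exp_neg_mul_le_one_div s (b := c * (q - p) / 2) (by positivity)
    have : 0 ≤ ((q - p) / 2) ^ (d - 1) * (s * exp (-(c * s * (u - p)))) :=
      mul_nonneg (rpow_nonneg (by linarith) _) hweight
    linarith [mul_le_mul_of_nonneg_right hweight_le hkernel]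

lemma integral_mul_exp_neg_mul_rpow_le {c s d p q : ℝ} (hc : 0 < c) (hs : 0 ≤ s) (hd₀ : 0 < d)
    (hd₁ : d ≤ 1) (hpq : p < q) :
    ∫ u in p..q, s * exp (-(c * s * (u - p))) * (q - u) ^ (d - 1) ≤
      decayKernelConst c d * (q - p) ^ (d - 1) := by
  have hweight : IntervalIntegrable (fun u => s * exp (-(c * s * (u - p)))) volume p q :=
    (by fun_prop : Continuous _).intervalIntegrable _ _
  have hkernel := intervalIntegrable_sub_rpow_sub_one hd₀ p q
  calc ∫ u in p..q, s * exp (-(c * s * (u - p))) * (q - u) ^ (d - 1)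
      ≤ ∫ u in p..q, ((q - p) / 2) ^ (d - 1) * (s * exp (-(c * s * (u - p)))) +
          2 / (c * (q - p)) * (q - u) ^ (d - 1) :=
        integral_mono_on hpq.le (hkernel.continuousOn_mul (by fun_prop))
          ((hweight.const_mul _).add (hkernel.const_mul _))
          fun u hu => mul_exp_neg_mul_rpow_le_add hc hs hd₁ hpq hu
    _ = ((q - p) / 2) ^ (d - 1) * (∫ u in p..q, s * exp (-(c * s * (u - p)))) +
          2 / (c * (q - p)) * ((q - p) ^ d / d) := by
        rw [integral_add (hweight.const_mul _) (hkernel.const_mul _)]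
        rw [intervalIntegral.integral_const_mul (((q - p) / 2) ^ (d - 1)),
          intervalIntegral.integral_const_mul (2 / (c * (q - p))), integral_sub_rpow_sub_one hd₀]
    _ ≤ ((q - p) / 2) ^ (d - 1) * (1 / c) + 2 / (c * (q - p)) * ((q - p) ^ d / d) := by
        exact add_le_add (mul_le_mul_of_nonneg_left (integral_mul_exp_neg_le hc s p q)
          (rpow_nonneg (by linarith) _)) le_rfl
    _ = decayKernelConst c d * (q - p) ^ (d - 1) := by
        have hqp : q - p ≠ 0 := by linarith
        rw [div_rpow (by linarith) zero_le_two, rpow_sub_one hqp d, decayKernelConst]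
        field_simp

lemma mul_abs_integral_comp_mul_sub_rpow_le {f : ℝ → ℝ} {C c s d p q : ℝ}
    (hf : ∀ y, 0 ≤ y → |f y| ≤ C * exp (-c * y)) (hc : 0 < c) (hs : 0 ≤ s) (hd₀ : 0 < d)
    (hd₁ : d ≤ 1) (hpq : p < q) :
    s * |∫ u in p..q, f (s * (u - p)) * (q - u) ^ (d - 1)| ≤
      C * decayKernelConst c d * (q - p) ^ (d - 1) := by
  have hC : 0 ≤ C := by simpa using (abs_nonneg _).trans (hf 0 le_rfl)
  have hpointwise : ∀ u ∈ Set.Ioc p q, ‖s * (f (s * (u - p)) * (q - u) ^ (d - 1))‖ ≤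
      C * (s * exp (-(c * s * (u - p))) * (q - u) ^ (d - 1)) := by
    intro u hu
    have hkernel : 0 ≤ (q - u) ^ (d - 1) := rpow_nonneg (by linarith [hu.2]) _
    have hy : 0 ≤ s * (u - p) := mul_nonneg hs (by linarith [hu.1])
    rw [norm_eq_abs, abs_mul, abs_mul, abs_of_nonneg hs, abs_of_nonneg hkernel]
    calc s * (|f (s * (u - p))| * (q - u) ^ (d - 1))
        ≤ s * (C * exp (-c * (s * (u - p))) * (q - u) ^ (d - 1)) := by gcongr; exact hf _ hy
      _ = C * (s * exp (-(c * s * (u - p))) * (q - u) ^ (d - 1)) := by ring_nf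
  have hbound : IntervalIntegrable
      (fun u => C * (s * exp (-(c * s * (u - p))) * (q - u) ^ (d - 1))) volume p q :=
    ((intervalIntegrable_sub_rpow_sub_one hd₀ p q).continuousOn_mul (by fun_prop)).const_mul C
  calc s * |∫ u in p..q, f (s * (u - p)) * (q - u) ^ (d - 1)|
      = ‖∫ u in p..q, s * (f (s * (u - p)) * (q - u) ^ (d - 1))‖ := by
        rw [intervalIntegral.integral_const_mul, norm_mul, norm_eq_abs, norm_eq_abs,
          abs_of_nonneg hs]
    _ ≤ ∫ u in p..q, C * (s * exp (-(c * s * (u - p))) * (q - u) ^ (d - 1)) :=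
        norm_integral_le_of_norm_le hpq.le (ae_of_all _ hpointwise) hbound
    _ = C * ∫ u in p..q, s * exp (-(c * s * (u - p))) * (q - u) ^ (d - 1) :=
        intervalIntegral.integral_const_mul _ _
    _ ≤ C * (decayKernelConst c d * (q - p) ^ (d - 1)) :=
        mul_le_mul_of_nonneg_left (integral_mul_exp_neg_mul_rpow_le hc hs hd₀ hd₁ hpq) hC
    _ = C * decayKernelConst c d * (q - p) ^ (d - 1) := by ring

lemma abs_mul_gamma_mul_integral_le {g : ℝ → ℝ} {θ C c t d p q : ℝ}
    (hg : ∀ y, 0 ≤ y → |g y| ≤ C * exp (-c * y)) (hc : 0 < c) (ht : t ≤ 0) (hd₀ : 0 < d)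
    (hd₁ : d ≤ 1) (hpq : p < q) :
    |t * ((1 / Gamma d) * ∫ u in p..q, θ * g (-t * (u - p)) * (q - u) ^ (d - 1))| ≤
      |θ| * C * decayKernelConst c d / Gamma d * (q - p) ^ (d - 1) := by
  have hθg : ∀ y, 0 ≤ y → |θ * g y| ≤ |θ| * C * exp (-c * y) := fun y hy => by
    rw [abs_mul, mul_assoc]
    exact mul_le_mul_of_nonneg_left (hg y hy) (abs_nonneg θ)
  have hΓ := Gamma_pos_of_pos hd₀
  have := mul_abs_integral_comp_mul_sub_rpow_le (f := fun y => θ * g y) hθg hc (neg_nonneg.2 ht)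
    hd₀ hd₁ hpq
  rw [abs_mul, abs_mul, abs_of_nonpos ht, abs_of_pos (one_div_pos.2 hΓ)]
  calc -t * (1 / Gamma d * |∫ u in p..q, θ * g (-t * (u - p)) * (q - u) ^ (d - 1)|)
      = 1 / Gamma d * (-t * |∫ u in p..q, θ * g (-t * (u - p)) * (q - u) ^ (d - 1)|) := by ring
    _ ≤ 1 / Gamma d * (|θ| * C * decayKernelConst c d * (q - p) ^ (d - 1)) := by gcongr
    _ = |θ| * C * decayKernelConst c d / Gamma d * (q - p) ^ (d - 1) := by ring

lemma phiFun_eq (d θ : ℝ) (g : ℝ → ℝ) (t x : ℝ) :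
    phiFun d θ g t x = 1 / Gamma d * ∫ u in (1 : ℝ)..x, θ * g (-t * (u - 1)) * (x - u) ^ (d - 1) := by
  simp only [phiFun, show ∀ u, t * (1 - u) = -t * (u - 1) from fun u => by ring]

lemma psiFun_eq (d θ : ℝ) (g : ℝ → ℝ) (t x : ℝ) :
    psiFun d θ g t x = 1 / Gamma d * ∫ u in (0 : ℝ)..x, θ * g (-t * (u - 0)) * (x - u) ^ (d - 1) := by
  simp only [psiFun, sub_zero, neg_mul]

theorem stmt12_general (α d θ₁ θ₂ : ℝ) (hα : 1 < α ∧ α < 2)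
    (hd : d ∈ Set.Ioo (0 : ℝ) (1 - 1 / α))
    (g : ℝ → ℝ) (C c : ℝ) (hC : 0 < C) (hc : 0 < c)
    (hgbd : ∀ s : ℝ, 0 ≤ s → |g s| ≤ C * Real.exp (-c * s)) :
    ∃ K₁ > (0 : ℝ), ∃ K₂ > (0 : ℝ), ∀ t < (0 : ℝ), ∀ x > (1 : ℝ),
      |t * phiFun d θ₁ g t x| ≤ K₁ * (x - 1) ^ (d - 1) ∧
        |t * psiFun d θ₂ g t x| ≤ K₂ * x ^ (d - 1) := by
  obtain ⟨hd₀, hdα⟩ := hd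
  have hd₁ : d ≤ 1 := by linarith [one_div_pos.2 (zero_lt_one.trans hα.1)]
  have hB := decayKernelConst_pos hc hd₀
  have hΓ := Gamma_pos_of_pos hd₀
  refine ⟨|θ₁| * C * decayKernelConst c d / Gamma d + 1, by positivity,
    |θ₂| * C * decayKernelConst c d / Gamma d + 1, by positivity, fun t ht x hx => ⟨?_, ?_⟩⟩
  · rw [phiFun_eq]
    refine (abs_mul_gamma_mul_integral_le hgbd hc ht.le hd₀ hd₁ hx).trans ?_
    exact mul_le_mul_of_nonneg_right (by linarith) (rpow_nonneg (by linarith) _)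
  · rw [psiFun_eq]
    refine (abs_mul_gamma_mul_integral_le hgbd hc ht.le hd₀ hd₁ (by linarith)).trans ?_
    rw [sub_zero]
    exact mul_le_mul_of_nonneg_right (by linarith) (rpow_nonneg (by linarith) _)

/-- there exist `K₁, K₂ > 0` such that for all `t < 0` and `x > 1`,
`|t φ(t,x)| ≤ K₁ (x-1)^{d-1}` and `|t ψ(t,x)| ≤ K₂ x^{d-1}`. -/
theorem stmt12 (α d θ₁ θ₂ : ℝ) (hα : 1 < α ∧ α < 2)
    (hd : d ∈ Set.Ioo (0 : ℝ) (1 - 1 / α))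
    (g : ℝ → ℝ) (hg : Measurable g) (C c : ℝ) (hC : 0 < C) (hc : 0 < c)
    (hg0 : ∀ s < (0 : ℝ), g s = 0)
    (hgbd : ∀ s : ℝ, 0 ≤ s → |g s| ≤ C * Real.exp (-c * s)) :
    ∃ K₁ > (0 : ℝ), ∃ K₂ > (0 : ℝ), ∀ t < (0 : ℝ), ∀ x > (1 : ℝ),
      |t * phiFun d θ₁ g t x| ≤ K₁ * (x - 1) ^ (d - 1) ∧
        |t * psiFun d θ₂ g t x| ≤ K₂ * x ^ (d - 1) :=
  stmt12_general α d θ₁ θ₂ hα hd g C c hC hc hgbd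
end

section
/- Let 1 < α < 2, d ∈ (0, 1 − 1/α), and θ_1, θ_2 ∈ ℝ. Then the function x ↦ |θ_1 (x−1)^{d−1} + θ_2 x^{d−1}|^α − |θ_1 (x−1)^{d−1}|^α − |θ_2 x^{d−1}|^α is (absolutely) Lebesgue integrable on (1, ∞); in particular the constant C_0 = ∫_1^∞ ( |θ_1 (x−1)^{d−1} + θ_2 x^{d−1}|^α − |θ_1 (x−1)^{d−1}|^α − |θ_2 x^{d−1}|^α ) dx is a well-defined finite real number. -/
/-!
Since `(d - 1) α < -1`, the three terms are not integrable near `x = 1` separately, so the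
cancellation has to be used. The mean value theorem for `t ↦ t ^ α`, together with
subadditivity of `t ↦ t ^ (α - 1)` for `α ≤ 2`, gives
`| |a + b| ^ α - |a| ^ α - |b| ^ α | ≤ α |a| ^ (α - 1) |b| + (α + 1) |b| ^ α`.
For `a = θ₁ (x - 1) ^ (d - 1)` and `b = θ₂ x ^ (d - 1)` the right-hand side is a combination of
`(x - 1) ^ ((d - 1) (α - 1)) x ^ (d - 1)` and `x ^ ((d - 1) α)`, both integrable on `(1, ∞)`
because `(d - 1) (α - 1) > -1` and `(d - 1) α < -1`.
-/

open MeasureTheory Set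

lemma rpow_sub_rpow_le_mul_sub {α u v : ℝ} (hα : 1 ≤ α) (hv : 0 ≤ v) (hvu : v ≤ u) :
    u ^ α - v ^ α ≤ α * u ^ (α - 1) * (u - v) := by
  rcases hvu.eq_or_lt with rfl | hvu
  · simp
  obtain ⟨c, ⟨hvc, hcu⟩, hslope⟩ := exists_hasDerivAt_eq_slope (fun t : ℝ ↦ t ^ α)
    (fun t ↦ α * t ^ (α - 1)) hvu (by fun_prop (disch := linarith))
    fun t ht ↦ Real.hasDerivAt_rpow_const (Or.inl (hv.trans_lt ht.1).ne')
  have hc : c ^ (α - 1) ≤ u ^ (α - 1) :=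
    Real.rpow_le_rpow (hv.trans hvc.le) hcu.le (by linarith)
  rw [eq_div_iff (sub_pos.2 hvu).ne'] at hslope
  rw [← hslope]
  gcongr

lemma abs_rpow_sub_rpow_le {α u v M : ℝ} (hα : 1 ≤ α) (hu : 0 ≤ u) (hv : 0 ≤ v)
    (huM : u ≤ M) (hvM : v ≤ M) : |u ^ α - v ^ α| ≤ α * M ^ (α - 1) * |u - v| := by
  wlog hvu : v ≤ u generalizing u v
  · rw [abs_sub_comm, abs_sub_comm u]
    exact this hv hu hvM huM (le_of_not_ge hvu)
  have hmono : u ^ (α - 1) ≤ M ^ (α - 1) := Real.rpow_le_rpow hu huM (by linarith)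
  rw [abs_of_nonneg (sub_nonneg.2 (Real.rpow_le_rpow hv hvu (by linarith))),
    abs_of_nonneg (sub_nonneg.2 hvu)]
  calc u ^ α - v ^ α ≤ α * u ^ (α - 1) * (u - v) := rpow_sub_rpow_le_mul_sub hα hv hvu
    _ ≤ α * M ^ (α - 1) * (u - v) := by gcongr

lemma abs_abs_add_rpow_sub_sub_le {α : ℝ} (hα₁ : 1 ≤ α) (hα₂ : α ≤ 2) (a b : ℝ) :
    |(|a + b| ^ α - |a| ^ α - |b| ^ α)| ≤ α * |a| ^ (α - 1) * |b| + (α + 1) * |b| ^ α := by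
  have hlip : |(|a + b| ^ α - |a| ^ α)| ≤ α * (|a| + |b|) ^ (α - 1) * |b| :=
    (abs_rpow_sub_rpow_le hα₁ (abs_nonneg _) (abs_nonneg _) (abs_add_le a b)
      (le_add_of_nonneg_right (abs_nonneg b))).trans
      (mul_le_mul_of_nonneg_left (by simpa using abs_abs_sub_abs_le_abs_sub (a + b) a)
        (by positivity))
  have hsub : (|a| + |b|) ^ (α - 1) ≤ |a| ^ (α - 1) + |b| ^ (α - 1) :=
    Real.rpow_add_le_add_rpow (abs_nonneg a) (abs_nonneg b) (by linarith) (by linarith)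
  have hb : |b| ^ (α - 1) * |b| = |b| ^ α := by
    rw [← Real.rpow_add_one' (abs_nonneg b) (by linarith), sub_add_cancel]
  calc |(|a + b| ^ α - |a| ^ α - |b| ^ α)|
      ≤ |(|a + b| ^ α - |a| ^ α)| + |(|b| ^ α)| := abs_sub _ _
    _ ≤ α * (|a| ^ (α - 1) + |b| ^ (α - 1)) * |b| + |b| ^ α := by
      rw [abs_of_nonneg (Real.rpow_nonneg (abs_nonneg b) α)]
      exact add_le_add_left (hlip.trans (by gcongr)) _
    _ = α * |a| ^ (α - 1) * |b| + (α + 1) * |b| ^ α := by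
      rw [← hb]; ring

lemma integrableOn_Ioi_one_sub_rpow_mul_rpow {r s : ℝ} (hr : -1 < r) (hr₀ : r ≤ 0)
    (hrs : r + s < -1) : IntegrableOn (fun x : ℝ ↦ (x - 1) ^ r * x ^ s) (Ioi 1) := by
  have hmeas : AEStronglyMeasurable (fun x : ℝ ↦ (x - 1) ^ r * x ^ s) volume := by
    fun_prop
  rw [← Ioc_union_Ioi_eq_Ioi one_le_two]
  refine IntegrableOn.union ?_ ?_
  · have hint : IntegrableOn (fun x : ℝ ↦ (x - 1) ^ r) (Ioc 1 2) := by
      have := (intervalIntegral.intervalIntegrable_rpow' hr (a := 0) (b := 1)).comp_sub_right 1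
      rw [zero_add, one_add_one_eq_two] at this
      exact (intervalIntegrable_iff_integrableOn_Ioc_of_le one_le_two).1 this
    refine hint.mono' hmeas.restrict ?_
    filter_upwards [ae_restrict_mem measurableSet_Ioc] with x hx
    have hx₀ : 0 < x := zero_lt_one.trans hx.1
    have hx₁ : 0 < x - 1 := sub_pos.2 hx.1
    rw [Real.norm_eq_abs, abs_of_nonneg (by positivity)]
    exact mul_le_of_le_one_right (by positivity)
      (Real.rpow_le_one_of_one_le_of_nonpos hx.1.le (by linarith))
  · have hint : IntegrableOn (fun x : ℝ ↦ x ^ (r + s) / 2 ^ r) (Ioi 2) :=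
      (integrableOn_Ioi_rpow_of_lt hrs two_pos).div_const _
    refine hint.mono' hmeas.restrict ?_
    filter_upwards [ae_restrict_mem measurableSet_Ioi] with x (hx : 2 < x)
    have hx₀ : 0 < x := by linarith
    have hx₁ : 0 < x - 1 := by linarith
    rw [Real.norm_eq_abs, abs_of_nonneg (by positivity), Real.rpow_add hx₀, mul_div_right_comm,
      ← Real.div_rpow hx₀.le zero_le_two]
    exact mul_le_mul_of_nonneg_right
      (Real.rpow_le_rpow_of_nonpos (half_pos hx₀) (by linarith) hr₀) (by positivity)

lemma abs_mul_rpow_rpow (c : ℝ) {t : ℝ} (ht : 0 ≤ t) (p q : ℝ) :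
    |c * t ^ p| ^ q = |c| ^ q * t ^ (p * q) := by
  rw [abs_mul, abs_of_nonneg (Real.rpow_nonneg ht p),
    Real.mul_rpow (abs_nonneg c) (Real.rpow_nonneg ht p), ← Real.rpow_mul ht]

/-- the function
`x ↦ |θ₁(x-1)^{d-1} + θ₂ x^{d-1}|^α - |θ₁(x-1)^{d-1}|^α - |θ₂ x^{d-1}|^α`
is Lebesgue integrable on `(1, ∞)`; in particular the corresponding integral
is a well-defined finite real constant. -/
theorem stmt15 (α d θ₁ θ₂ : ℝ) (hα : 1 < α ∧ α < 2)
    (hd : d ∈ Set.Ioo (0 : ℝ) (1 - 1 / α)) :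
    IntegrableOn
      (fun x : ℝ =>
        |θ₁ * (x - 1) ^ (d - 1) + θ₂ * x ^ (d - 1)| ^ α -
          |θ₁ * (x - 1) ^ (d - 1)| ^ α - |θ₂ * x ^ (d - 1)| ^ α)
      (Set.Ioi (1 : ℝ)) volume := by
  obtain ⟨hα₁, hα₂⟩ := hα
  obtain ⟨hd₀, hd₁⟩ := hd
  have hα_inv : 0 < 1 / α ∧ 1 / α * α = 1 := ⟨by positivity, one_div_mul_cancel (by positivity)⟩
  have hdα : (d - 1) * α < -1 := by nlinarith
  have hg := integrableOn_Ioi_one_sub_rpow_mul_rpow (r := (d - 1) * (α - 1)) (s := d - 1)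
    (by nlinarith) (by nlinarith) (by convert hdα using 1; ring)
  have hh := integrableOn_Ioi_rpow_of_lt hdα one_pos
  refine ((hg.const_mul (α * |θ₁| ^ (α - 1) * |θ₂|)).add
    (hh.const_mul ((α + 1) * |θ₂| ^ α))).mono' (by fun_prop) ?_
  filter_upwards [ae_restrict_mem measurableSet_Ioi] with x (hx : 1 < x)
  have hb : |θ₂ * x ^ (d - 1)| = |θ₂| * x ^ (d - 1) := by
    simpa using abs_mul_rpow_rpow θ₂ (zero_le_one.trans hx.le) (d - 1) 1
  calc _ ≤ α * |θ₁ * (x - 1) ^ (d - 1)| ^ (α - 1) * |θ₂ * x ^ (d - 1)|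
        + (α + 1) * |θ₂ * x ^ (d - 1)| ^ α :=
      abs_abs_add_rpow_sub_sub_le hα₁.le hα₂.le _ _
    _ = _ := by
      rw [Pi.add_apply, abs_mul_rpow_rpow θ₁ (sub_nonneg.2 hx.le),
        abs_mul_rpow_rpow θ₂ (by linarith), hb]
      ring
end

section
/- Let 1 < α < 2, d ∈ (0, 1 − 1/α), θ_1, θ_2 ∈ ℝ, and let g : ℝ → ℝ be measurable with g(s) = 0 for all s < 0 and |g(s)| ≤ C e^{−cs} for all s ≥ 0, for some constants C, c > 0. For t < 0 define A(t,x) = ∫_x^t θ_1 g(t−u) (u−x)^{d−1} du and B(x) = ∫_x^0 θ_2 g(−u) (u−x)^{d−1} du, and I(t) = Γ(d)^{−α} ∫_{−∞}^t ( |A(t,x) + B(x)|^α − |A(t,x)|^α − |B(x)|^α ) dx. Then for every t < 0, I(t) = |t|^{αd+1} ∫_1^∞ ( |φ(t,x) + ψ(t,x)|^α − |φ(t,x)|^α − |ψ(t,x)|^α ) dx. -/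
/-!
The substitution `x = t y`, `u = t v` (with `t < 0`) maps `(-∞, t)` onto `(1, ∞)`, turns `A(t, ty)`
and `B(ty)` into `(-t)^d Γ(d) φ(t,y)` and `(-t)^d Γ(d) ψ(t,y)`, and contributes a factor `-t`
from `dx`. Since the integrand is positively homogeneous of degree `α` in `(A, B)`, the scaling
factor in front of the integral is `(-t) ((-t)^d Γ(d))^α / Γ(d)^α = |t|^(αd+1)`.
-/

open MeasureTheory

open Set

theorem intervalIntegral_mul_rpow_sub_comp_mul_of_neg (h : ℝ → ℝ) {t b y : ℝ} (d : ℝ)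
    (ht : t < 0) (hby : b ≤ y) :
    ∫ u in t * y..t * b, h u * (u - t * y) ^ (d - 1)
      = (-t) ^ d * ∫ v in b..y, h (t * v) * (y - v) ^ (d - 1) := by
  have hnt : 0 < -t := by linarith
  have hkernel : EqOn (fun v => h (t * v) * (t * v - t * y) ^ (d - 1))
      (fun v => (-t) ^ (d - 1) * (h (t * v) * (y - v) ^ (d - 1))) (uIcc b y) := by
    intro v hv
    rw [uIcc_of_le hby] at hv
    dsimp only
    rw [show t * v - t * y = -t * (y - v) by ring,
      Real.mul_rpow hnt.le (sub_nonneg.mpr hv.2)]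
    ring
  have hpow : (-t) ^ d = -t * (-t) ^ (d - 1) := by
    rw [Real.rpow_sub_one hnt.ne', mul_div_cancel₀ _ hnt.ne']
  have hsubst := intervalIntegral.integral_comp_mul_left
    (fun u => h u * (u - t * y) ^ (d - 1)) (a := y) (b := b) ht.ne
  rw [smul_eq_mul, eq_inv_mul_iff_mul_eq₀ ht.ne] at hsubst
  rw [← hsubst, intervalIntegral.integral_symm b y, intervalIntegral.integral_congr hkernel,
    intervalIntegral.integral_const_mul, hpow]
  ring

theorem intervalIntegral_eq_mul_phiFun {d θ₁ t y : ℝ} (g : ℝ → ℝ) (hΓ : Real.Gamma d ≠ 0)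
    (ht : t < 0) (hy : 1 ≤ y) :
    ∫ u in t * y..t, θ₁ * g (t - u) * (u - t * y) ^ (d - 1)
      = (-t) ^ d * Real.Gamma d * phiFun d θ₁ g t y := by
  have := intervalIntegral_mul_rpow_sub_comp_mul_of_neg (fun u => θ₁ * g (t - u)) d ht hy
  rw [mul_one] at this
  simp only [this, phiFun, show ∀ v : ℝ, t - t * v = t * (1 - v) from fun v => by ring]
  field_simp

theorem intervalIntegral_eq_mul_psiFun {d θ₂ t y : ℝ} (g : ℝ → ℝ) (hΓ : Real.Gamma d ≠ 0)
    (ht : t < 0) (hy : 0 ≤ y) :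
    ∫ u in t * y..0, θ₂ * g (-u) * (u - t * y) ^ (d - 1)
      = (-t) ^ d * Real.Gamma d * psiFun d θ₂ g t y := by
  have := intervalIntegral_mul_rpow_sub_comp_mul_of_neg (fun u => θ₂ * g (-u)) d ht hy
  rw [mul_zero] at this
  rw [this, psiFun]
  field_simp

theorem integral_Iio_eq_neg_mul_integral_Ioi_comp_mul (F : ℝ → ℝ) {t : ℝ} (ht : t < 0) :
    ∫ x in Iio t, F x = -t * ∫ y in Ioi 1, F (t * y) := by
  have hnt : 0 < -t := by linarith
  have hscale := integral_comp_mul_left_Ioi (fun x => F (-x)) 1 hnt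
  simp only [neg_mul, neg_neg, mul_one] at hscale
  rw [hscale, integral_comp_neg_Ioi, neg_neg, integral_Iic_eq_integral_Iio, smul_eq_mul,
    ← mul_assoc, mul_inv_cancel₀ hnt.ne', one_mul]

theorem abs_add_rpow_sub_sub_of_mul {k : ℝ} (hk : 0 ≤ k) (α a b : ℝ) :
    |k * a + k * b| ^ α - |k * a| ^ α - |k * b| ^ α
      = k ^ α * (|a + b| ^ α - |a| ^ α - |b| ^ α) := by
  simp only [← mul_add, abs_mul, abs_of_nonneg hk, Real.mul_rpow hk (abs_nonneg _)]
  ring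

theorem stmt16_general (α d θ₁ θ₂ : ℝ)
    (hd : d ∈ Set.Ioo (0 : ℝ) (1 - 1 / α))
    (g : ℝ → ℝ)
    (A : ℝ → ℝ → ℝ) (hA : ∀ t x, A t x = ∫ u in x..t, θ₁ * g (t - u) * (u - x) ^ (d - 1))
    (B : ℝ → ℝ) (hB : ∀ x, B x = ∫ u in x..(0 : ℝ), θ₂ * g (-u) * (u - x) ^ (d - 1))
    (I : ℝ → ℝ)
    (hI : ∀ t, I t = (1 / Real.Gamma d ^ α) *
      ∫ x in Set.Iio t, (|A t x + B x| ^ α - |A t x| ^ α - |B x| ^ α)) :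
    ∀ t < (0 : ℝ),
      I t = |t| ^ (α * d + 1) *
        ∫ x in Set.Ioi (1 : ℝ),
          (|phiFun d θ₁ g t x + psiFun d θ₂ g t x| ^ α -
            |phiFun d θ₁ g t x| ^ α - |psiFun d θ₂ g t x| ^ α) := by
  intro t ht
  have hnt : 0 < -t := by linarith
  have hΓ : 0 < Real.Gamma d := Real.Gamma_pos_of_pos hd.1
  have hk : 0 ≤ (-t) ^ d * Real.Gamma d := by positivity
  have hscaled : ∀ y ∈ Ioi (1 : ℝ),
      |A t (t * y) + B (t * y)| ^ α - |A t (t * y)| ^ α - |B (t * y)| ^ α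
        = ((-t) ^ d * Real.Gamma d) ^ α * (|phiFun d θ₁ g t y + psiFun d θ₂ g t y| ^ α -
            |phiFun d θ₁ g t y| ^ α - |psiFun d θ₂ g t y| ^ α) := fun y hy => by
    rw [hA, hB, intervalIntegral_eq_mul_phiFun g hΓ.ne' ht hy.le,
      intervalIntegral_eq_mul_psiFun g hΓ.ne' ht (by linarith [mem_Ioi.mp hy]),
      abs_add_rpow_sub_sub_of_mul hk]
  have hconst : 1 / Real.Gamma d ^ α * (-t * ((-t) ^ d * Real.Gamma d) ^ α)
      = |t| ^ (α * d + 1) := by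
    rw [Real.mul_rpow (by positivity) hΓ.le, ← Real.rpow_mul hnt.le, abs_of_neg ht,
      Real.rpow_add hnt, Real.rpow_one, mul_comm α d]
    field_simp
  rw [hI, integral_Iio_eq_neg_mul_integral_Ioi_comp_mul _ ht,
    setIntegral_congr_fun measurableSet_Ioi hscaled, integral_const_mul, ← mul_assoc,
    ← mul_assoc, mul_assoc (1 / _), hconst]

/-- with `A(t,x) = ∫_x^t θ₁ g(t-u)(u-x)^{d-1} du`,
`B(x) = ∫_x^0 θ₂ g(-u)(u-x)^{d-1} du` and
`I(t) = Γ(d)^{-α} ∫_{-∞}^t (|A+B|^α - |A|^α - |B|^α) dx`, for every `t < 0`,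
`I(t) = |t|^{αd+1} ∫_1^∞ (|φ(t,x)+ψ(t,x)|^α - |φ(t,x)|^α - |ψ(t,x)|^α) dx`. -/
theorem stmt16 (α d θ₁ θ₂ : ℝ) (hα : 1 < α ∧ α < 2)
    (hd : d ∈ Set.Ioo (0 : ℝ) (1 - 1 / α))
    (g : ℝ → ℝ) (hg : Measurable g) (C c : ℝ) (hC : 0 < C) (hc : 0 < c)
    (hg0 : ∀ s < (0 : ℝ), g s = 0)
    (hgbd : ∀ s : ℝ, 0 ≤ s → |g s| ≤ C * Real.exp (-c * s))
    (A : ℝ → ℝ → ℝ) (hA : ∀ t x, A t x = ∫ u in x..t, θ₁ * g (t - u) * (u - x) ^ (d - 1))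
    (B : ℝ → ℝ) (hB : ∀ x, B x = ∫ u in x..(0 : ℝ), θ₂ * g (-u) * (u - x) ^ (d - 1))
    (I : ℝ → ℝ)
    (hI : ∀ t, I t = (1 / Real.Gamma d ^ α) *
      ∫ x in Set.Iio t, (|A t x + B x| ^ α - |A t x| ^ α - |B x| ^ α)) :
    ∀ t < (0 : ℝ),
      I t = |t| ^ (α * d + 1) *
        ∫ x in Set.Ioi (1 : ℝ),
          (|phiFun d θ₁ g t x + psiFun d θ₂ g t x| ^ α -
            |phiFun d θ₁ g t x| ^ α - |psiFun d θ₂ g t x| ^ α) :=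
  stmt16_general α d θ₁ θ₂ hd g A hA B hB I hI
end
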